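/- Let f(z) = ∑_{J ∈ ω} c_J z^J be holomorphic near 0 ∈ ℂⁿ with c_J ≠ 0 for J ∈ ω ⊆ ℤ₊ⁿ and f ≢ 0. Then for every a ∈ ℝ₊ⁿ, the directional Lelong number of u = log|f| at 0 in direction a equals min{⟨a,J⟩ : J ∈ ω}. -/

import Mathlib

open MeasureTheory Filter Metric Set Topology
open scoped ENNReal Topology

noncomputable section

/-- `ℂⁿ` with the Euclidean norm. -/
abbrev Cn (n : ℕ) := EuclideanSpace ℂ (Fin n)

noncomputable instance (n : ℕ) : MeasurableSpace (Cn n) := borel _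
instance (n : ℕ) : BorelSpace (Cn n) := ⟨rfl⟩
noncomputable instance (n : ℕ) : InnerProductSpace ℝ (Cn n) :=
  InnerProductSpace.rclikeToReal ℂ _

/-- The truncation of an extended real number to `ℝ≥0∞`. -/
def EReal.toENNReal' (x : EReal) : ℝ≥0∞ :=
  if x = ⊤ then ⊤ else ENNReal.ofReal x.toReal

/-- The mean value of an `EReal`-valued function with respect to a measure `μ`,
defined via truncation from above:  for any real upper bound `C` of `f`, the mean is
`C - (∫ (C - f) dμ) / μ(univ)`; we take the infimum over all such bounds. -/
def erealAvg {α : Type*} [MeasurableSpace α] (μ : Measure α) (f : α → EReal) : EReal :=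
  ⨅ C : {C : ℝ // ∀ a, f a ≤ (C : EReal)},
    ((C : ℝ) : EReal) -
      (((∫⁻ a, ((((C : ℝ) : EReal)) - f a).toENNReal' ∂μ) / μ Set.univ : ℝ≥0∞) : EReal)

/-- A function `u` with values in `[-∞, ∞)` is plurisubharmonic on `Ω` if it is upper
semicontinuous on `Ω`, never takes the value `+∞`, and its restriction to every complex line
satisfies the sub-mean value inequality on every circle (together with its disc) contained
in `Ω`. -/
def Plurisubharmonic {E : Type*} [NormedAddCommGroup E] [NormedSpace ℂ E]
    (Ω : Set E) (u : E → EReal) : Prop :=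
  UpperSemicontinuousOn u Ω ∧ (∀ z, u z ≠ ⊤) ∧
  ∀ (x y : E) (r : ℝ), 0 < r →
    (∀ ζ : ℂ, ‖ζ‖ ≤ r → x + ζ • y ∈ Ω) →
    u x ≤ erealAvg (volume.restrict (Set.Ioc (0:ℝ) (2 * Real.pi)))
      (fun θ : ℝ => u (x + ((r : ℂ) * Complex.exp (θ * Complex.I)) • y))

/-- `Λ(u,x,t)`: the supremum of `u` over the ball of radius `e^t` centered at `x`. -/
def supBall {E : Type*} [NormedAddCommGroup E] (u : E → EReal) (x : E) (t : ℝ) : EReal :=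
  sSup (u '' ball x (Real.exp t))

/-- `λ(u,x,t)`: the mean of `u` over the sphere of radius `e^t` centered at `x`,
with respect to the normalized surface measure. -/
def sphereMean {n : ℕ} (u : Cn n → EReal) (x : Cn n) (t : ℝ) : EReal :=
  erealAvg ((volume : Measure (Cn n)).toSphere)
    (fun z : sphere (0 : Cn n) 1 => u (x + Real.exp t • (z : Cn n)))

/-- The Lelong number of `u` at `x` is `ν`:  `Λ(u,x,t)/t → ν` as `t → -∞`. -/
def HasLelongNumber {E : Type*} [NormedAddCommGroup E] (u : E → EReal) (x : E) (ν : EReal) : Prop :=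
  Tendsto (fun t : ℝ => ((t⁻¹ : ℝ) : EReal) * supBall u x t) atBot (𝓝 ν)

/-- Convexity (on a subset of `ℝ`) for `EReal`-valued functions. -/
def ERealConvexOn (s : Set ℝ) (f : ℝ → EReal) : Prop :=
  ∀ ⦃t₁⦄, t₁ ∈ s → ∀ ⦃t₂⦄, t₂ ∈ s → ∀ ⦃a b : ℝ⦄, 0 ≤ a → 0 ≤ b → a + b = 1 →
    f (a * t₁ + b * t₂) ≤ (a : EReal) * f t₁ + (b : EReal) * f t₂

/-- `Λ(u,x,ta)`: the supremum of `u` over the closed polydisc with polyradius `e^{t a}`. -/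
def supPoly {n : ℕ} (u : Cn n → EReal) (x : Cn n) (a : Fin n → ℝ) (t : ℝ) : EReal :=
  sSup (u '' {z : Cn n | ∀ k, ‖z k - x k‖ ≤ Real.exp (t * a k)})

/-- The directional Lelong number of `u` at `x` in the direction `a` is `ν`. -/
def HasDirLelongNumber {n : ℕ} (u : Cn n → EReal) (x : Cn n) (a : Fin n → ℝ) (ν : EReal) : Prop :=
  Tendsto (fun t : ℝ => ((t⁻¹ : ℝ) : EReal) * supPoly u x a t) atBot (𝓝 ν)
section Statement10Helpers

private lemma prod_exp_pow {n : ℕ} (a : Fin n → ℝ) (t : ℝ) (J : Fin n → ℕ) :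
    ∏ k, Real.exp (t * a k) ^ (J k) = Real.exp (t * ∑ k, a k * (J k : ℝ)) := by
  rw [Finset.mul_sum, Real.exp_sum]
  refine Finset.prod_congr rfl fun k _ => ?_
  rw [← Real.exp_nat_mul]
  exact congrArg Real.exp (by ring)

private lemma rootsum (N : ℕ) (hN : N ≠ 0) (e : ℕ) :
    ∑ j : Fin N, (Complex.exp (2 * Real.pi * Complex.I / N)) ^ ((j : ℕ) * e)
      = if N ∣ e then (N : ℂ) else 0 := by
  have hprim := Complex.isPrimitiveRoot_exp N hN
  set ζ := Complex.exp (2 * Real.pi * Complex.I / N) with hζ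
  have h1 : ∀ j : Fin N, ζ ^ ((j : ℕ) * e) = (ζ ^ e) ^ (j : ℕ) := fun j => by
    rw [← pow_mul, mul_comm]
  simp_rw [h1]
  rw [Fin.sum_univ_eq_sum_range (fun j => (ζ ^ e) ^ j)]
  by_cases hd : N ∣ e
  · have : ζ ^ e = 1 := by
      obtain ⟨q, rfl⟩ := hd
      rw [pow_mul, hprim.pow_eq_one, one_pow]
    simp [this, hd]
  · have hne : ζ ^ e ≠ 1 := fun h => hd ((hprim.pow_eq_one_iff_dvd e).mp h)
    rw [geom_sum_eq hne]
    have : (ζ ^ e) ^ N = 1 := by rw [← pow_mul, mul_comm, pow_mul, hprim.pow_eq_one, one_pow]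
    simp [this, hd]

private lemma summable_abs' {n : ℕ} {R : ℝ} {c : (Fin n → ℕ) → ℂ} {f : Cn n → ℂ}
    (hf : ∀ z : Cn n, (∀ k, ‖z k‖ < R) →
      HasSum (fun J : Fin n → ℕ => c J * ∏ k, (z k) ^ (J k)) (f z))
    (w : Fin n → ℝ) (hw0 : ∀ k, 0 ≤ w k) (hwR : ∀ k, w k < R) :
    Summable (fun J : Fin n → ℕ => ‖c J‖ * ∏ k, (w k) ^ (J k)) := by
  have h := hf (WithLp.toLp 2 (fun k => (w k : ℂ))) (fun k => by
    show ‖((w k : ℂ))‖ < R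
    rw [Complex.norm_of_nonneg (hw0 k)]; exact hwR k)
  have hs : Summable (fun J : Fin n → ℕ => ‖c J * ∏ k, ((w k : ℂ)) ^ (J k)‖) :=
    summable_norm_iff.mpr h.summable
  convert hs using 2 with J
  simp only [norm_mul, norm_prod, norm_pow, Complex.norm_real, Real.norm_eq_abs]
  congr 1
  exact Finset.prod_congr rfl fun k _ => by rw [abs_of_nonneg (hw0 k)]

private lemma summable_exp' {n : ℕ} {R : ℝ} {c : (Fin n → ℕ) → ℂ} {f : Cn n → ℂ}
    (hf : ∀ z : Cn n, (∀ k, ‖z k‖ < R) →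
      HasSum (fun J : Fin n → ℕ => c J * ∏ k, (z k) ^ (J k)) (f z))
    (a : Fin n → ℝ) (t : ℝ) (htR : ∀ k, Real.exp (t * a k) < R) :
    Summable (fun J : Fin n → ℕ =>
      ‖c J‖ * Real.exp (t * ∑ k, a k * (J k : ℝ))) := by
  have := summable_abs' hf (fun k => Real.exp (t * a k)) (fun k => (Real.exp_pos _).le) htR
  simpa only [prod_exp_pow] using this

private lemma nu_attained {n : ℕ} (c : (Fin n → ℕ) → ℂ) (hω : ∃ J, c J ≠ 0)
    (a : Fin n → ℝ) (ha : ∀ k, 0 < a k) (ε : ℝ) (hε : 0 < ε) (hεa : ∀ k, ε ≤ a k) :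
    ∃ J₀ : Fin n → ℕ, c J₀ ≠ 0 ∧
      sInf {s : ℝ | ∃ J : Fin n → ℕ, c J ≠ 0 ∧ s = ∑ k, a k * (J k : ℝ)} = ∑ k, a k * (J₀ k : ℝ) ∧
      ∀ J : Fin n → ℕ, c J ≠ 0 → ∑ k, a k * (J₀ k : ℝ) ≤ ∑ k, a k * (J k : ℝ) := by
  classical
  obtain ⟨J₁, hJ₁⟩ := hω
  set dot : (Fin n → ℕ) → ℝ := fun J => ∑ k, a k * (J k : ℝ) with hdot
  have hdotnn : ∀ J, 0 ≤ dot J := fun J =>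
    Finset.sum_nonneg fun k _ => mul_nonneg (ha k).le (Nat.cast_nonneg _)
  set b := dot J₁ with hb
  have hcoord : ∀ J : Fin n → ℕ, dot J ≤ b → ∀ k, J k ≤ ⌈b / ε⌉₊ := by
    intro J hJ k
    have h1 : ε * J k ≤ dot J := by
      calc ε * (J k : ℝ) ≤ a k * J k := by
            exact mul_le_mul_of_nonneg_right (hεa k) (Nat.cast_nonneg _)
        _ ≤ dot J := Finset.single_le_sum (f := fun k => a k * (J k : ℝ))
            (fun i _ => mul_nonneg (ha i).le (Nat.cast_nonneg _)) (Finset.mem_univ k)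
    have h2 : (J k : ℝ) ≤ b / ε := by
      rw [le_div_iff₀ hε]; nlinarith [hJ]
    exact_mod_cast h2.trans (Nat.le_ceil _)
  have hfin : {J : Fin n → ℕ | c J ≠ 0 ∧ dot J ≤ b}.Finite := by
    apply Set.Finite.subset (Set.Finite.pi (fun k : Fin n => Set.finite_Iic ⌈b / ε⌉₊))
    intro J hJ
    exact fun k _ => hcoord J hJ.2 k
  have hne : {J : Fin n → ℕ | c J ≠ 0 ∧ dot J ≤ b}.Nonempty := ⟨J₁, hJ₁, le_refl _⟩
  obtain ⟨J₀, hJ₀mem, hJ₀min⟩ := Set.exists_min_image _ dot hfin hne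
  have hmin : ∀ J : Fin n → ℕ, c J ≠ 0 → dot J₀ ≤ dot J := by
    intro J hJ
    by_cases h : dot J ≤ b
    · exact hJ₀min J ⟨hJ, h⟩
    · exact le_trans (hJ₀min J₁ ⟨hJ₁, le_refl _⟩) (le_of_not_ge h)
  refine ⟨J₀, hJ₀mem.1, ?_, hmin⟩
  apply le_antisymm
  · apply csInf_le
    · exact ⟨0, fun s hs => by obtain ⟨J, _, rfl⟩ := hs; exact hdotnn J⟩
    · exact ⟨J₀, hJ₀mem.1, rfl⟩
  · refine le_csInf ⟨b, J₁, hJ₁, rfl⟩ ?_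
    rintro s ⟨J, hJ, rfl⟩
    exact hmin J hJ

end Statement10Helpers

private lemma upper_bound {n : ℕ} {R : ℝ} {c : (Fin n → ℕ) → ℂ} {f : Cn n → ℂ}
    (hf : ∀ z : Cn n, (∀ k, ‖z k‖ < R) →
      HasSum (fun J : Fin n → ℕ => c J * ∏ k, (z k) ^ (J k)) (f z))
    (a : Fin n → ℝ) (ha : ∀ k, 0 < a k) (J₀ : Fin n → ℕ)
    (hνmin : ∀ J : Fin n → ℕ, c J ≠ 0 → ∑ k, a k * (J₀ k : ℝ) ≤ ∑ k, a k * (J k : ℝ))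
    (t₀ t : ℝ) (ht : t ≤ t₀) (ht₀R : ∀ k, Real.exp (t₀ * a k) < R)
    (z : Cn n) (hz : ∀ k, ‖z k‖ ≤ Real.exp (t * a k)) :
    ‖f z‖ ≤ Real.exp ((t - t₀) * ∑ k, a k * (J₀ k : ℝ)) *
      ∑' J : Fin n → ℕ, ‖c J‖ * Real.exp (t₀ * ∑ k, a k * (J k : ℝ)) := by
  classical
  set dot : (Fin n → ℕ) → ℝ := fun J => ∑ k, a k * (J k : ℝ) with hdot
  set ν := dot J₀ with hν
  have htR : ∀ k, Real.exp (t * a k) < R := fun k =>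
    lt_of_le_of_lt (Real.exp_le_exp.mpr (mul_le_mul_of_nonneg_right ht (ha k).le)) (ht₀R k)
  have hzR : ∀ k, ‖z k‖ < R := fun k => lt_of_le_of_lt (hz k) (htR k)
  have hfs := hf z hzR
  have hnorm_sum : Summable (fun J : Fin n → ℕ => ‖c J * ∏ k, (z k) ^ (J k)‖) :=
    summable_norm_iff.mpr hfs.summable
  have hAt : Summable (fun J : Fin n → ℕ => ‖c J‖ * Real.exp (t₀ * dot J)) :=
    summable_exp' hf a t₀ ht₀R
  have hpt1 : ∀ J : Fin n → ℕ, ‖c J * ∏ k, (z k) ^ (J k)‖ ≤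
      Real.exp ((t - t₀) * ν) * (‖c J‖ * Real.exp (t₀ * dot J)) := by
    intro J
    have h1 : ‖c J * ∏ k, (z k) ^ (J k)‖ ≤ ‖c J‖ * Real.exp (t * dot J) := by
      rw [norm_mul, norm_prod]
      rw [← prod_exp_pow a t J]
      refine mul_le_mul_of_nonneg_left ?_ (norm_nonneg _)
      refine Finset.prod_le_prod (fun k _ => by positivity) fun k _ => ?_
      rw [norm_pow]
      exact pow_le_pow_left₀ (norm_nonneg _) (hz k) _
    refine h1.trans ?_
    by_cases hc : c J = 0
    · simp [hc, Real.exp_nonneg]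
    · have hJν : ν ≤ dot J := hνmin J hc
      have h2 : Real.exp (t * dot J) ≤ Real.exp ((t - t₀) * ν) * Real.exp (t₀ * dot J) := by
        rw [← Real.exp_add]
        apply Real.exp_le_exp.mpr
        nlinarith
      calc ‖c J‖ * Real.exp (t * dot J)
          ≤ ‖c J‖ * (Real.exp ((t - t₀) * ν) * Real.exp (t₀ * dot J)) :=
            mul_le_mul_of_nonneg_left h2 (norm_nonneg _)
        _ = Real.exp ((t - t₀) * ν) * (‖c J‖ * Real.exp (t₀ * dot J)) := by ring
  calc ‖f z‖ = ‖∑' J : Fin n → ℕ, c J * ∏ k, (z k) ^ (J k)‖ := by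
        rw [hfs.tsum_eq]
    _ ≤ ∑' J : Fin n → ℕ, ‖c J * ∏ k, (z k) ^ (J k)‖ := norm_tsum_le_tsum_norm hnorm_sum
    _ ≤ ∑' J : Fin n → ℕ, Real.exp ((t - t₀) * ν) *
          (‖c J‖ * Real.exp (t₀ * dot J)) :=
        Summable.tsum_le_tsum hpt1 hnorm_sum (hAt.mul_left _)
    _ = Real.exp ((t - t₀) * ν) * ∑' J : Fin n → ℕ,
          ‖c J‖ * Real.exp (t₀ * dot J) := tsum_mul_left

set_option maxHeartbeats 1000000 in
private lemma lower_bound {n : ℕ} {R : ℝ} {c : (Fin n → ℕ) → ℂ} {f : Cn n → ℂ}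
    (hf : ∀ z : Cn n, (∀ k, ‖z k‖ < R) →
      HasSum (fun J : Fin n → ℕ => c J * ∏ k, (z k) ^ (J k)) (f z))
    (a : Fin n → ℝ) (ha : ∀ k, 0 < a k) (ε : ℝ) (hε : 0 < ε) (hεa : ∀ k, ε ≤ a k)
    (J₀ : Fin n → ℕ) (N : ℕ) (hN : N ≠ 0) (hNJ : ∀ k, J₀ k < N)
    (t₀ t : ℝ) (ht : t ≤ t₀) (ht₀R : ∀ k, Real.exp (t₀ * a k) < R) :
    ∃ z : Cn n, (∀ k, ‖z k‖ ≤ Real.exp (t * a k)) ∧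
      ‖c J₀‖ * Real.exp (t * ∑ k, a k * (J₀ k : ℝ)) -
        Real.exp ((t - t₀) * ((∑ k, a k * (J₀ k : ℝ)) + N * ε)) *
          ∑' J : Fin n → ℕ, ‖c J‖ * Real.exp (t₀ * ∑ k, a k * (J k : ℝ)) ≤
      ‖f z‖ := by
  classical
  by_contra hcon
  push_neg at hcon
  set dot : (Fin n → ℕ) → ℝ := fun J => ∑ k, a k * (J k : ℝ) with hdot
  set ν : ℝ := ∑ k, a k * (J₀ k : ℝ) with hν
  set δ : ℝ := (N : ℝ) * ε with hδ
  set A : ℝ := ∑' J : Fin n → ℕ, ‖c J‖ * Real.exp (t₀ * ∑ k, a k * (J k : ℝ))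
    with hA
  set q : ℝ := ‖c J₀‖ * Real.exp (t * ν) - Real.exp ((t - t₀) * (ν + δ)) * A
    with hq
  set ζ : ℂ := Complex.exp (2 * Real.pi * Complex.I / N) with hζdef
  have hprim := Complex.isPrimitiveRoot_exp N hN
  have hζabs : ‖ζ‖ = 1 := by
    have h : ζ = Complex.exp ((2 * Real.pi / N : ℝ) * Complex.I) := by
      rw [hζdef]; push_cast; ring_nf
    rw [h, Complex.norm_exp_ofReal_mul_I]
  have htR : ∀ k, Real.exp (t * a k) < R := fun k =>
    lt_of_le_of_lt (Real.exp_le_exp.mpr (mul_le_mul_of_nonneg_right ht (ha k).le)) (ht₀R k)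
  set zm : (Fin n → Fin N) → Cn n :=
    fun m => (WithLp.toLp 2 (fun k => ζ ^ (m k : ℕ) * (Real.exp (t * a k) : ℂ))) with hzm
  have hzmk : ∀ m k, (zm m) k = ζ ^ (m k : ℕ) * (Real.exp (t * a k) : ℂ) := fun m k => rfl
  have hzm_abs : ∀ m k, ‖(zm m) k‖ = Real.exp (t * a k) := by
    intro m k
    rw [hzmk, norm_mul, norm_pow, hζabs, one_pow, one_mul, Complex.norm_real, Real.norm_eq_abs,
      abs_of_nonneg (Real.exp_nonneg _)]
  set w : (Fin n → Fin N) → ℂ := fun m => ζ ^ (∑ k, (m k : ℕ) * (N - J₀ k)) with hw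
  have hw_abs : ∀ m, ‖w m‖ = 1 := fun m => by
    rw [hw, norm_pow, hζabs, one_pow]
  set Avg : ℂ := ∑ m : Fin n → Fin N, w m * f (zm m) with hAvgdef
  have hsum : HasSum (fun J : Fin n → ℕ => ∑ m : Fin n → Fin N,
      w m * (c J * ∏ k, ((zm m) k) ^ (J k))) Avg :=
    hasSum_sum fun m _ => ((hf (zm m) (fun k => by rw [hzm_abs]; exact htR k)).mul_left (w m))
  -- pointwise simplification of the averaged series
  have hpt : (fun J : Fin n → ℕ => ∑ m : Fin n → Fin N, w m * (c J * ∏ k, ((zm m) k) ^ (J k)))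
      = (fun J : Fin n → ℕ => (if ∀ k, N ∣ (J k + (N - J₀ k)) then ((N : ℂ)) ^ n else 0) *
        (c J * (Real.exp (t * dot J) : ℂ))) := by
    funext J
    have hterm : ∀ m : Fin n → Fin N, w m * (c J * ∏ k, ((zm m) k) ^ (J k)) =
        ζ ^ (∑ k, (m k : ℕ) * (J k + (N - J₀ k))) * (c J * (Real.exp (t * dot J) : ℂ)) := by
      intro m
      have h1 : ∏ k, ((zm m) k) ^ (J k)
          = ζ ^ (∑ k, (m k : ℕ) * J k) * (Real.exp (t * dot J) : ℂ) := by
        calc ∏ k, ((zm m) k) ^ (J k)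
            = ∏ k, (ζ ^ ((m k : ℕ) * J k) * ((Real.exp (t * a k) : ℂ)) ^ (J k)) := by
              refine Finset.prod_congr rfl fun k _ => ?_
              rw [hzmk, mul_pow, ← pow_mul]
          _ = (∏ k, ζ ^ ((m k : ℕ) * J k)) * ∏ k, ((Real.exp (t * a k) : ℂ)) ^ (J k) :=
              Finset.prod_mul_distrib
          _ = ζ ^ (∑ k, (m k : ℕ) * J k) * (Real.exp (t * dot J) : ℂ) := by
              rw [Finset.prod_pow_eq_pow_sum]
              congr 1
              rw [← prod_exp_pow a t J]
              push_cast
              ring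
      have h2 : ∑ k, (m k : ℕ) * (J k + (N - J₀ k))
          = (∑ k, (m k : ℕ) * J k) + ∑ k, (m k : ℕ) * (N - J₀ k) := by
        rw [← Finset.sum_add_distrib]
        exact Finset.sum_congr rfl fun k _ => by ring
      rw [h1, hw, h2, pow_add]
      ring
    rw [Finset.sum_congr rfl fun m _ => hterm m, ← Finset.sum_mul]
    congr 1
    have h3 : ∀ m : Fin n → Fin N, ζ ^ (∑ k, (m k : ℕ) * (J k + (N - J₀ k)))
        = ∏ k, ζ ^ ((m k : ℕ) * (J k + (N - J₀ k))) :=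
      fun m => (Finset.prod_pow_eq_pow_sum _ _ _).symm
    rw [Finset.sum_congr rfl fun m _ => h3 m,
      ← Fintype.prod_sum (fun k (j : Fin N) => ζ ^ ((j : ℕ) * (J k + (N - J₀ k))))]
    by_cases hall : ∀ k, N ∣ (J k + (N - J₀ k))
    · rw [if_pos hall]
      calc ∏ k, ∑ j : Fin N, ζ ^ ((j : ℕ) * (J k + (N - J₀ k)))
          = ∏ _k : Fin n, (N : ℂ) := Finset.prod_congr rfl fun k _ => by
            rw [rootsum N hN, if_pos (hall k)]
        _ = (N : ℂ) ^ n := by simp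
    · rw [if_neg hall]
      push_neg at hall
      obtain ⟨k₀, hk₀⟩ := hall
      refine Finset.prod_eq_zero (Finset.mem_univ k₀) ?_
      rw [rootsum N hN, if_neg hk₀]
  rw [hpt] at hsum
  -- extract the main term at J₀
  have hcondJ₀ : ∀ k, N ∣ (J₀ k + (N - J₀ k)) := fun k => by
    rw [Nat.add_sub_cancel' (hNJ k).le]
  set M : ℂ := ((N : ℂ)) ^ n * (c J₀ * (Real.exp (t * ν) : ℂ)) with hM
  have hMsum : HasSum (fun J : Fin n → ℕ => if J = J₀ then M else 0) M := hasSum_ite_eq J₀ M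
  have htail := hsum.sub hMsum
  have htail_summ : Summable (fun J : Fin n → ℕ =>
      ‖(if ∀ k, N ∣ (J k + (N - J₀ k)) then ((N : ℂ)) ^ n else 0) *
        (c J * (Real.exp (t * dot J) : ℂ)) - (if J = J₀ then M else 0)‖) :=
    summable_norm_iff.mpr htail.summable
  have hAt₀ : Summable (fun J : Fin n → ℕ => ‖c J‖ * Real.exp (t₀ * dot J)) :=
    summable_exp' hf a t₀ ht₀R
  -- pointwise tail bound
  have hptb : ∀ J : Fin n → ℕ,
      ‖(if ∀ k, N ∣ (J k + (N - J₀ k)) then ((N : ℂ)) ^ n else 0) *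
        (c J * (Real.exp (t * dot J) : ℂ)) - (if J = J₀ then M else 0)‖ ≤
      ((N : ℝ) ^ n * Real.exp ((t - t₀) * (ν + δ))) *
        (‖c J‖ * Real.exp (t₀ * dot J)) := by
    intro J
    have hrhs : (0:ℝ) ≤ ((N : ℝ) ^ n * Real.exp ((t - t₀) * (ν + δ))) *
        (‖c J‖ * Real.exp (t₀ * dot J)) := by positivity
    by_cases hJ : J = J₀
    · rw [hJ, if_pos hcondJ₀, if_pos rfl, show dot J₀ = ν from rfl, ← hM, sub_self,
        norm_zero]
      positivity
    · rw [if_neg hJ, sub_zero]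
      by_cases hall : ∀ k, N ∣ (J k + (N - J₀ k))
      · rw [if_pos hall]
        by_cases hc : c J = 0
        · simp only [hc, zero_mul, mul_zero, norm_zero]
          positivity
        · have hdich : ∀ k, J k = J₀ k ∨ J₀ k + N ≤ J k := by
            intro k
            obtain ⟨p, hp⟩ := hall k
            have hJk := hNJ k
            rcases Nat.lt_or_ge p 2 with h2 | h2
            · interval_cases p <;> omega
            · have h3 : N * 2 ≤ N * p := Nat.mul_le_mul_left N h2
              omega
          obtain ⟨k₁, hk₁⟩ : ∃ k, J k ≠ J₀ k := by
            by_contra hcc; push_neg at hcc; exact hJ (funext hcc)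
          have hge : ∀ k, (0:ℝ) ≤ a k * ((J k : ℝ) - (J₀ k : ℝ)) := by
            intro k
            rcases hdich k with h | h
            · rw [h]; simp
            · have h4 : (J₀ k : ℝ) ≤ (J k : ℝ) := by
                exact_mod_cast le_trans (Nat.le_add_right _ _) h
              nlinarith [ha k]
          have hk₁N : (J₀ k₁ : ℝ) + (N : ℝ) ≤ (J k₁ : ℝ) := by
            exact_mod_cast (hdich k₁).resolve_left hk₁
          have hsumlb : a k₁ * ((J k₁ : ℝ) - (J₀ k₁ : ℝ)) ≤
              ∑ k, a k * ((J k : ℝ) - (J₀ k : ℝ)) :=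
            Finset.single_le_sum (fun k _ => hge k) (Finset.mem_univ k₁)
          have hsub : dot J - ν = ∑ k, a k * ((J k : ℝ) - (J₀ k : ℝ)) := by
            rw [hν, hdot, ← Finset.sum_sub_distrib]
            exact Finset.sum_congr rfl fun k _ => (mul_sub _ _ _).symm
          have hδle : ν + δ ≤ dot J := by
            have h5 : δ ≤ a k₁ * ((J k₁ : ℝ) - (J₀ k₁ : ℝ)) := by
              have h6 : (N : ℝ) ≤ (J k₁ : ℝ) - (J₀ k₁ : ℝ) := by linarith
              have h7 : ε ≤ a k₁ := hεa k₁
              have hN' : (0:ℝ) ≤ (N : ℝ) := Nat.cast_nonneg _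
              rw [hδ]
              nlinarith
            linarith
          have hnorm : ‖((N : ℂ)) ^ n * (c J * (Real.exp (t * dot J) : ℂ))‖
              = (N : ℝ) ^ n * (‖c J‖ * Real.exp (t * dot J)) := by
            rw [norm_mul, norm_pow, norm_mul, Complex.norm_natCast, Complex.norm_real,
              Real.norm_eq_abs, abs_of_nonneg (Real.exp_nonneg _)]
          rw [hnorm]
          have hexp : Real.exp (t * dot J) ≤
              Real.exp ((t - t₀) * (ν + δ)) * Real.exp (t₀ * dot J) := by
            rw [← Real.exp_add]
            apply Real.exp_le_exp.mpr
            nlinarith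
          calc (N : ℝ) ^ n * (‖c J‖ * Real.exp (t * dot J))
              ≤ (N : ℝ) ^ n * (‖c J‖ *
                (Real.exp ((t - t₀) * (ν + δ)) * Real.exp (t₀ * dot J))) := by
                have := mul_le_mul_of_nonneg_left hexp (norm_nonneg (c J))
                have hNn : (0:ℝ) ≤ (N : ℝ) ^ n := by positivity
                nlinarith
            _ = ((N : ℝ) ^ n * Real.exp ((t - t₀) * (ν + δ))) *
                (‖c J‖ * Real.exp (t₀ * dot J)) := by ring
      · rw [if_neg hall, zero_mul, norm_zero]
        exact hrhs
  -- tail sum bound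
  have htail_bound : ‖Avg - M‖ ≤ ((N : ℝ) ^ n * Real.exp ((t - t₀) * (ν + δ))) * A := by
    rw [← htail.tsum_eq]
    refine le_trans (norm_tsum_le_tsum_norm htail_summ) ?_
    refine le_trans (Summable.tsum_le_tsum hptb htail_summ (hAt₀.mul_left _)) ?_
    rw [tsum_mul_left]
  have hMnorm : ‖M‖ = (N : ℝ) ^ n * (‖c J₀‖ * Real.exp (t * ν)) := by
    rw [hM, norm_mul, norm_pow, norm_mul, Complex.norm_natCast, Complex.norm_real,
      Real.norm_eq_abs, abs_of_nonneg (Real.exp_nonneg _)]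
  have hAvg_lb : (N : ℝ) ^ n * q ≤ ‖Avg‖ := by
    have h1 : ‖M‖ - ‖Avg‖ ≤ ‖M - Avg‖ := norm_sub_norm_le M Avg
    rw [norm_sub_rev] at h1
    rw [hq]
    have hNn : (0:ℝ) ≤ (N : ℝ) ^ n := by positivity
    nlinarith [htail_bound, hMnorm, h1]
  have hAvg_ub : ‖Avg‖ ≤ ∑ m : Fin n → Fin N, ‖f (zm m)‖ := by
    rw [hAvgdef]
    refine (norm_sum_le _ _).trans ?_
    refine Finset.sum_le_sum fun m _ => ?_
    rw [norm_mul, hw_abs, one_mul]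
  have hlt : ∀ m : Fin n → Fin N, ‖f (zm m)‖ < q :=
    fun m => hcon (zm m) (fun k => le_of_eq (hzm_abs m k))
  have hnonempty : Nonempty (Fin n → Fin N) := ⟨fun _ => ⟨0, Nat.pos_of_ne_zero hN⟩⟩
  have hcard : (Finset.univ : Finset (Fin n → Fin N)).card = N ^ n := by
    simp [Finset.card_univ]
  have hstrict : ∑ m : Fin n → Fin N, ‖f (zm m)‖ < (N : ℝ) ^ n * q := by
    calc ∑ m : Fin n → Fin N, ‖f (zm m)‖
        < ∑ _m : Fin n → Fin N, q :=
        Finset.sum_lt_sum_of_nonempty Finset.univ_nonempty fun m _ => hlt m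
      _ = (N : ℝ) ^ n * q := by
        rw [Finset.sum_const, hcard, nsmul_eq_mul]
        push_cast
        ring
  linarith [hAvg_lb.trans hAvg_ub]

set_option maxHeartbeats 1000000 in
/-- If `f(z) = ∑_{J ∈ ω} c_J z^J` is holomorphic near `0 ∈ ℂⁿ`, `f ≢ 0`,
then for every `a ∈ ℝ₊ⁿ` the directional Lelong number of `log|f|` at `0` in direction `a`
equals `min {⟨a,J⟩ : J ∈ ω}`, where `ω = {J : c_J ≠ 0}`. -/
theorem statement10 {n : ℕ} (R : ℝ) (hR : 0 < R) (c : (Fin n → ℕ) → ℂ) (f : Cn n → ℂ)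
    (hf : ∀ z : Cn n, (∀ k, ‖z k‖ < R) →
      HasSum (fun J : Fin n → ℕ => c J * ∏ k, (z k) ^ (J k)) (f z))
    (hω : ∃ J, c J ≠ 0) (a : Fin n → ℝ) (ha : ∀ k, 0 < a k) :
    HasDirLelongNumber
      (fun z => if f z = 0 then (⊥ : EReal)
        else ((Real.log (‖f z‖) : ℝ) : EReal))
      0 a
      ((sInf {s : ℝ | ∃ J : Fin n → ℕ, c J ≠ 0 ∧ s = ∑ k, a k * (J k : ℝ)} : ℝ) : EReal) := by
  classical
  obtain ⟨ε, hε, hεa⟩ : ∃ ε : ℝ, 0 < ε ∧ ∀ k, ε ≤ a k := by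
    rcases isEmpty_or_nonempty (Fin n) with h | h
    · exact ⟨1, one_pos, fun k => (h.elim k)⟩
    · obtain ⟨k₀, -, hk₀⟩ := Finset.exists_min_image Finset.univ a ⟨h.some, Finset.mem_univ _⟩
      exact ⟨a k₀, ha k₀, fun k => hk₀ k (Finset.mem_univ k)⟩
  obtain ⟨J₀, hJ₀, hνeq, hνmin⟩ := nu_attained c hω a ha ε hε hεa
  rw [HasDirLelongNumber, hνeq]
  set u : Cn n → EReal := fun z => if f z = 0 then (⊥ : EReal)
    else ((Real.log (‖f z‖) : ℝ) : EReal) with hu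
  set ν : ℝ := ∑ k, a k * (J₀ k : ℝ) with hν
  set N : ℕ := Finset.univ.sup J₀ + 1 with hN
  have hNne : N ≠ 0 := Nat.succ_ne_zero _
  have hNJ : ∀ k, J₀ k < N := fun k =>
    Nat.lt_succ_of_le (Finset.le_sup (Finset.mem_univ k))
  set δ : ℝ := (N : ℝ) * ε with hδ
  have hδpos : 0 < δ := mul_pos (by exact_mod_cast Nat.pos_of_ne_zero hNne) hε
  have hcabs : 0 < ‖c J₀‖ := norm_pos_iff.mpr hJ₀
  -- choose t₀
  have hev : ∀ᶠ t in atBot, ∀ k : Fin n, Real.exp (t * a k) < R := by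
    rw [eventually_all]
    intro k
    have h1 : Tendsto (fun t : ℝ => t * a k) atBot atBot :=
      tendsto_id.atBot_mul_const (ha k)
    exact (Real.tendsto_exp_atBot.comp h1).eventually (gt_mem_nhds hR)
  obtain ⟨t₀, ht₀R⟩ := eventually_atBot.mp hev
  set A : ℝ := ∑' J : Fin n → ℕ, ‖c J‖ * Real.exp (t₀ * ∑ k, a k * (J k : ℝ))
    with hA
  have hAsum : Summable (fun J : Fin n → ℕ =>
      ‖c J‖ * Real.exp (t₀ * ∑ k, a k * (J k : ℝ))) :=
    summable_exp' hf a t₀ (ht₀R t₀ le_rfl)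
  have hApos : 0 < A := by
    have h2 : ‖c J₀‖ * Real.exp (t₀ * ∑ k, a k * (J₀ k : ℝ)) ≤ A :=
      Summable.le_tsum hAsum J₀ (fun J _ => by positivity)
    have h1 : 0 < ‖c J₀‖ * Real.exp (t₀ * ∑ k, a k * (J₀ k : ℝ)) := by positivity
    linarith
  set K₁ : ℝ := Real.log (‖c J₀‖ / 2) with hK₁
  set K₂ : ℝ := Real.log A - t₀ * ν with hK₂
  -- eventual smallness of the tail
  have hsmall : ∀ᶠ t in atBot, Real.exp ((t - t₀) * (ν + δ)) * A ≤
      ‖c J₀‖ / 2 * Real.exp (t * ν) := by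
    have hg : Tendsto (fun t : ℝ => Real.exp (t * δ - t₀ * (ν + δ)) * A) atBot (𝓝 0) := by
      have h1 : Tendsto (fun t : ℝ => t * δ - t₀ * (ν + δ)) atBot atBot := by
        have := tendsto_id.atBot_mul_const hδpos
        exact tendsto_atBot_add_const_right atBot (-(t₀ * (ν + δ))) this |>.congr
          (fun t => by simp only [id_eq]; ring)
      have := (Real.tendsto_exp_atBot.comp h1).mul_const A
      simpa using this
    filter_upwards [hg.eventually (gt_mem_nhds (by positivity :
        (0:ℝ) < ‖c J₀‖ / 2))] with t hglt
    have hsplit : Real.exp ((t - t₀) * (ν + δ)) * A =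
        Real.exp (t * ν) * (Real.exp (t * δ - t₀ * (ν + δ)) * A) := by
      rw [← mul_assoc, ← Real.exp_add]
      congr 1
      ring
    rw [hsplit]
    calc Real.exp (t * ν) * (Real.exp (t * δ - t₀ * (ν + δ)) * A)
        ≤ Real.exp (t * ν) * (‖c J₀‖ / 2) :=
        mul_le_mul_of_nonneg_left hglt.le (Real.exp_nonneg _)
      _ = ‖c J₀‖ / 2 * Real.exp (t * ν) := by ring
  -- the band on supPoly
  have hband : ∀ᶠ t in atBot, (((t * ν + K₁ : ℝ)) : EReal) ≤ supPoly u 0 a t ∧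
      supPoly u 0 a t ≤ (((t * ν + K₂ : ℝ)) : EReal) := by
    filter_upwards [hsmall, eventually_le_atBot t₀] with t hsm ht
    constructor
    · -- lower bound on supPoly
      obtain ⟨z, hzmem, hzlb⟩ :=
        lower_bound hf a ha ε hε hεa J₀ N hNne hNJ t₀ t ht (ht₀R t₀ le_rfl)
      rw [← hν, ← hA, ← hδ] at hzlb
      have hqz : ‖c J₀‖ / 2 * Real.exp (t * ν) ≤ ‖f z‖ := by
        linarith
      have habs : 0 < ‖f z‖ := lt_of_lt_of_le (by positivity) hqz
      have hfz0 : f z ≠ 0 := norm_pos_iff.mp habs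
      have huz : u z = ((Real.log (‖f z‖) : ℝ) : EReal) := by
        rw [hu]; simp only [if_neg hfz0]
      have hlog : t * ν + K₁ ≤ Real.log (‖f z‖) := by
        have h1 := Real.log_le_log (by positivity) hqz
        rw [Real.log_mul (by positivity) (Real.exp_ne_zero _), Real.log_exp] at h1
        rw [hK₁]; linarith
      have hmem : z ∈ {z : Cn n | ∀ k, ‖z k - (0 : Cn n) k‖ ≤
          Real.exp (t * a k)} := by
        intro k
        rw [show (0 : Cn n) k = 0 from rfl, sub_zero]
        exact hzmem k
      refine le_trans ?_ (le_sSup ⟨z, hmem, rfl⟩)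
      rw [huz]
      exact_mod_cast hlog
    · -- upper bound on supPoly
      refine sSup_le ?_
      rintro y ⟨z, hzmem, rfl⟩
      by_cases hfz : f z = 0
      · rw [hu]; simp only [if_pos hfz]; exact bot_le
      · have hzle : ∀ k, ‖z k‖ ≤ Real.exp (t * a k) := fun k => by
          have := hzmem k
          rwa [show (0 : Cn n) k = 0 from rfl, sub_zero] at this
        have hub := upper_bound hf a ha J₀ hνmin t₀ t ht (ht₀R t₀ le_rfl) z hzle
        rw [← hν, ← hA] at hub
        have habs : 0 < ‖f z‖ := norm_pos_iff.mpr hfz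
        have hlog : Real.log (‖f z‖) ≤ t * ν + K₂ := by
          have h1 := Real.log_le_log habs hub
          rw [Real.log_mul (Real.exp_ne_zero _) hApos.ne', Real.log_exp] at h1
          rw [hK₂]; linarith
        rw [hu]; simp only [if_neg hfz]
        exact_mod_cast hlog
  -- the real-valued limit
  have hmain : Tendsto (fun t : ℝ => t⁻¹ * (supPoly u 0 a t).toReal) atBot (𝓝 ν) := by
    have hinv : Tendsto (fun t : ℝ => t⁻¹) atBot (𝓝 (0:ℝ)) := by
      have h := (tendsto_inv_atTop_zero (𝕜 := ℝ)).comp tendsto_neg_atBot_atTop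
      have h2 := h.neg
      simpa [Function.comp, inv_neg, neg_neg] using h2
    have hlim1 : Tendsto (fun t : ℝ => ν + K₂ * t⁻¹) atBot (𝓝 ν) := by
      have := hinv.const_mul K₂
      simpa using tendsto_const_nhds.add this
    have hlim2 : Tendsto (fun t : ℝ => ν + K₁ * t⁻¹) atBot (𝓝 ν) := by
      have := hinv.const_mul K₁
      simpa using tendsto_const_nhds.add this
    refine tendsto_of_tendsto_of_tendsto_of_le_of_le' hlim1 hlim2 ?_ ?_
    · filter_upwards [hband, eventually_lt_atBot 0] with t hb htneg
      have htne : t ≠ 0 := ne_of_lt htneg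
      have hnt : supPoly u 0 a t ≠ ⊤ := (lt_of_le_of_lt hb.2 (EReal.coe_lt_top _)).ne
      have hnb : supPoly u 0 a t ≠ ⊥ := (lt_of_lt_of_le (EReal.bot_lt_coe _) hb.1).ne'
      have hcoe : ((supPoly u 0 a t).toReal : EReal) = supPoly u 0 a t :=
        EReal.coe_toReal hnt hnb
      have hub : (supPoly u 0 a t).toReal ≤ t * ν + K₂ :=
        EReal.coe_le_coe_iff.mp (by rw [hcoe]; exact hb.2)
      have h1 : t⁻¹ * (t * ν + K₂) ≤ t⁻¹ * (supPoly u 0 a t).toReal :=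
        mul_le_mul_of_nonpos_left hub (le_of_lt (inv_lt_zero.mpr htneg))
      have e1 : t⁻¹ * (t * ν + K₂) = ν + K₂ * t⁻¹ := by
        rw [mul_add, ← mul_assoc, inv_mul_cancel₀ htne, one_mul, mul_comm]
      linarith
    · filter_upwards [hband, eventually_lt_atBot 0] with t hb htneg
      have htne : t ≠ 0 := ne_of_lt htneg
      have hnt : supPoly u 0 a t ≠ ⊤ := (lt_of_le_of_lt hb.2 (EReal.coe_lt_top _)).ne
      have hnb : supPoly u 0 a t ≠ ⊥ := (lt_of_lt_of_le (EReal.bot_lt_coe _) hb.1).ne'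
      have hcoe : ((supPoly u 0 a t).toReal : EReal) = supPoly u 0 a t :=
        EReal.coe_toReal hnt hnb
      have hlb : t * ν + K₁ ≤ (supPoly u 0 a t).toReal :=
        EReal.coe_le_coe_iff.mp (by rw [hcoe]; exact hb.1)
      have h1 : t⁻¹ * (supPoly u 0 a t).toReal ≤ t⁻¹ * (t * ν + K₁) :=
        mul_le_mul_of_nonpos_left hlb (le_of_lt (inv_lt_zero.mpr htneg))
      have e1 : t⁻¹ * (t * ν + K₁) = ν + K₁ * t⁻¹ := by
        rw [mul_add, ← mul_assoc, inv_mul_cancel₀ htne, one_mul, mul_comm]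
      linarith
  refine Filter.Tendsto.congr' ?_ (EReal.tendsto_coe.mpr hmain)
  filter_upwards [hband] with t hb
  have hnt : supPoly u 0 a t ≠ ⊤ := (lt_of_le_of_lt hb.2 (EReal.coe_lt_top _)).ne
  have hnb : supPoly u 0 a t ≠ ⊥ := (lt_of_lt_of_le (EReal.bot_lt_coe _) hb.1).ne'
  have hcoe : ((supPoly u 0 a t).toReal : EReal) = supPoly u 0 a t :=
    EReal.coe_toReal hnt hnb
  rw [EReal.coe_mul, hcoe]
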